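/- Let K be a simplicial complex with a covering K = K_1 ∪ ⋯ ∪ K_r by subcomplexes, and suppose the symmetric group Σ_r acts simplicially on K so that g · K_i = K_{g(i)} for all g ∈ Σ_r and all i. Let N(K) be the nerve of this covering, on which Σ_r acts by permuting the sets K_1,…,K_r. Then there exists a Σ_r-equivariant continuous map from K to the geometric realization of Δ(N(K)), the order complex of the face poset of N(K) (the barycentric subdivision of the nerve). -/

import Mathlib

/-- An abstract simplicial complex on a vertex type `V`: a downward-closed collection of
nonempty finite vertex sets. -/
structure AbstractSimplicialComplex' (V : Type) where
  faces : Set (Finset V)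
  nonempty_of_mem : ∀ s ∈ faces, s.Nonempty
  down_closed : ∀ s ∈ faces, ∀ t, t ⊆ s → t.Nonempty → t ∈ faces

/-- The geometric realization of an abstract simplicial complex, as the set of convex
weightings of the vertices supported on a face. -/
def realization {V : Type} (K : AbstractSimplicialComplex' V) : Set (V → ℝ) :=
  {x | (∀ v, 0 ≤ x v) ∧ ∃ s ∈ K.faces, (∀ v, x v ≠ 0 → v ∈ s) ∧ ∑ v ∈ s, x v = 1}

/-- The geometric realization of the barycentric subdivision `Δ(N(K))` of the nerve of the
covering of `K` by the subcomplexes `Ksub i`: its vertices are the faces of the nerve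
(the nonempty `S : Finset (Fin r)` such that the subcomplexes `Ksub i`, `i ∈ S`, have a
common face), and its simplices are chains of such sets. -/
def nerveSubdivisionRealization {V : Type} (r : ℕ) (K : AbstractSimplicialComplex' V)
    (Ksub : Fin r → Set (Finset V)) : Set (Finset (Fin r) → ℝ) :=
  {y | (∀ S, 0 ≤ y S) ∧ (∑ S, y S = 1) ∧
    (∀ S, y S ≠ 0 → S.Nonempty ∧ ∃ s ∈ K.faces, ∀ i ∈ S, s ∈ Ksub i) ∧
    (∀ S T, y S ≠ 0 → y T ≠ 0 → S ⊆ T ∨ T ⊆ S)}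

/-!
Write a point `x` of a face `A` of `K` in the barycentric subdivision of `A`: the weight of the
barycentre of `u ⊆ A` is `|u| · (min_u x - max_{A \ u} x)⁺` (with `max ∅ = 0`). It vanishes
unless `u` is a strict superlevel set of `x`, so the faces carrying weight form a chain, and the
weights add up to `∑ v ∈ A, x v = 1`. Pushing this point forward along the order-reversing map
`u ↦ {i | u ∈ K_i}` from faces of `K` to faces of the nerve gives a point of `Δ(N(K))`; the map
commutes with the actions because `Σ_r` permutes the labels `K_i` compatibly. It is continuous in
the product topology because the weights are Lipschitz in `x`, and a point near `x` puts little
mass outside `A`.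
-/

open Finset Filter Topology

section MassEstimates

variable {ι : Type*} [DecidableEq ι] {f g : ι → ℝ} {P Q : Finset ι}

theorem sum_sdiff_le_sum_abs_sub (hQP : Q ⊆ P) (hg : ∀ i ∈ P \ Q, g i = 0)
    (hfg : ∑ i ∈ P, f i ≤ ∑ i ∈ P, g i) :
    ∑ i ∈ P \ Q, f i ≤ ∑ i ∈ Q, |f i - g i| := by
  have hP : ∑ i ∈ P, g i = ∑ i ∈ Q, g i := (sum_subset hQP fun i hi hiQ =>
    hg i (mem_sdiff.2 ⟨hi, hiQ⟩)).symm
  have hQ : ∑ i ∈ Q, (g i - f i) ≤ ∑ i ∈ Q, |f i - g i| :=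
    sum_le_sum fun i _ => abs_sub_comm (f i) (g i) ▸ le_abs_self _
  rw [sum_sub_distrib] at hQ
  linarith [sum_sdiff hQP (f := f)]

theorem abs_sub_le_sum_abs_sub (hQP : Q ⊆ P) (hf : ∀ i ∈ P, 0 ≤ f i)
    (hg : ∀ i ∈ P \ Q, g i = 0) (hfg : ∑ i ∈ P, f i ≤ ∑ i ∈ P, g i) {i : ι} (hi : i ∈ P) :
    |f i - g i| ≤ ∑ j ∈ Q, |f j - g j| := by
  by_cases hiQ : i ∈ Q
  · exact single_le_sum (fun j _ => abs_nonneg (f j - g j)) hiQ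
  · have hiPQ : i ∈ P \ Q := mem_sdiff.2 ⟨hi, hiQ⟩
    rw [hg i hiPQ, sub_zero, abs_of_nonneg (hf i hi)]
    exact (single_le_sum (fun j hj => hf j (mem_sdiff.1 hj).1) hiPQ).trans
      (sum_sdiff_le_sum_abs_sub hQP hg hfg)

theorem abs_sum_sub_sum_le {R : Finset ι} (hQP : Q ⊆ P) (hRP : R ⊆ P)
    (hf : ∀ i ∈ P, 0 ≤ f i) (hg : ∀ i ∈ P \ Q, g i = 0)
    (hfg : ∑ i ∈ P, f i ≤ ∑ i ∈ P, g i) :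
    |∑ i ∈ R, f i - ∑ i ∈ R, g i| ≤ 2 * ∑ i ∈ Q, |f i - g i| := by
  have hRg : ∑ i ∈ R, g i = ∑ i ∈ R ∩ Q, g i := (sum_subset inter_subset_left fun i hi hiRQ =>
    hg i (mem_sdiff.2 ⟨hRP hi, fun hiQ => hiRQ (mem_inter.2 ⟨hi, hiQ⟩)⟩)).symm
  have hinter : |∑ i ∈ R ∩ Q, f i - ∑ i ∈ R ∩ Q, g i| ≤ ∑ i ∈ Q, |f i - g i| := by
    rw [← sum_sub_distrib]
    exact (abs_sum_le_sum_abs _ _).trans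
      (sum_le_sum_of_subset_of_nonneg inter_subset_right fun _ _ _ => abs_nonneg _)
  have hdiff_nonneg : 0 ≤ ∑ i ∈ R \ Q, f i :=
    sum_nonneg fun i hi => hf i (hRP (mem_sdiff.1 hi).1)
  have hdiff : ∑ i ∈ R \ Q, f i ≤ ∑ i ∈ Q, |f i - g i| :=
    (sum_le_sum_of_subset_of_nonneg (sdiff_subset_sdiff hRP le_rfl)
      fun i hi _ => hf i (mem_sdiff.1 hi).1).trans (sum_sdiff_le_sum_abs_sub hQP hg hfg)
  rw [← sum_inter_add_sum_sdiff R Q f, hRg]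
  rw [abs_sub_le_iff] at hinter ⊢
  constructor <;> linarith [hinter.1, hinter.2]

end MassEstimates

section BarycentricSubdivision

variable {V : Type*}

def posSup (x : V → ℝ) (s : Finset V) : ℝ := s.fold max 0 x

theorem posSup_nonneg (x : V → ℝ) (s : Finset V) : 0 ≤ posSup x s :=
  (le_fold_max _).2 (Or.inl le_rfl)

theorem le_posSup {x : V → ℝ} {s : Finset V} {v : V} (hv : v ∈ s) : x v ≤ posSup x s :=
  (le_fold_max _).2 (Or.inr ⟨v, hv, le_rfl⟩)

theorem posSup_le {x : V → ℝ} {s : Finset V} {c : ℝ} (h0 : 0 ≤ c) (h : ∀ v ∈ s, x v ≤ c) :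
    posSup x s ≤ c :=
  (fold_max_le _).2 ⟨h0, h⟩

theorem abs_posSup_sub_le {x y : V → ℝ} {s : Finset V} {δ : ℝ} (hδ : 0 ≤ δ)
    (h : ∀ v ∈ s, |x v - y v| ≤ δ) : |posSup x s - posSup y s| ≤ δ := by
  have key : ∀ x y : V → ℝ, (∀ v ∈ s, |x v - y v| ≤ δ) → posSup x s ≤ posSup y s + δ :=
    fun x y h => posSup_le (by linarith [posSup_nonneg y s]) fun v hv => by
      linarith [le_posSup (x := y) hv, (abs_sub_le_iff.1 (h v hv)).1]
  exact abs_sub_le_iff.2 ⟨by linarith [key x y h],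
    by linarith [key y x fun v hv => abs_sub_comm (x v) (y v) ▸ h v hv]⟩

theorem abs_inf'_sub_le {x y : V → ℝ} {u : Finset V} (hu : u.Nonempty) {δ : ℝ}
    (h : ∀ v ∈ u, |x v - y v| ≤ δ) : |u.inf' hu x - u.inf' hu y| ≤ δ := by
  obtain ⟨v, hv, hxv⟩ := exists_mem_eq_inf' hu x
  obtain ⟨w, hw, hyw⟩ := exists_mem_eq_inf' hu y
  have := inf'_le x hw
  have := inf'_le y hv
  have := abs_sub_le_iff.1 (h v hv)
  have := abs_sub_le_iff.1 (h w hw)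
  exact abs_sub_le_iff.2 ⟨by linarith, by linarith⟩

theorem inf'_sub_const {u : Finset V} (hu : u.Nonempty) (x : V → ℝ) (c : ℝ) :
    u.inf' hu (fun v => x v - c) = u.inf' hu x - c := by
  simp only [sub_eq_add_neg]
  exact (map_finset_inf' (OrderIso.addRight (-c)) hu x).symm

variable [DecidableEq V]

theorem posSup_insert {x : V → ℝ} {s : Finset V} {v : V} (hv : v ∉ s) :
    posSup x (insert v s) = max (x v) (posSup x s) :=
  fold_insert hv

theorem posSup_sub_const (x : V → ℝ) (s : Finset V) {c : ℝ} (hc : 0 ≤ c) :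
    posSup (fun v => x v - c) s + c = max c (posSup x s) := by
  induction s using Finset.induction_on with
  | empty => simp [posSup, hc]
  | insert v s hv ih =>
    rw [posSup_insert hv, posSup_insert hv, ← max_add_add_right, ih, sub_add_cancel,
      max_left_comm]

/-- The weight of the barycentre of `u` when `x` is written in the barycentric subdivision of
the simplex `A`. -/
def baryCoord (x : V → ℝ) (A u : Finset V) : ℝ :=
  if hu : u.Nonempty then u.card * max 0 (u.inf' hu x - posSup x (A \ u)) else 0

theorem baryCoord_nonneg (x : V → ℝ) (A u : Finset V) : 0 ≤ baryCoord x A u := by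
  unfold baryCoord
  split_ifs
  exacts [by positivity, le_rfl]

theorem baryCoord_eq_zero {x : V → ℝ} {A u : Finset V} {v : V} (hv : v ∈ u)
    (hxv : x v ≤ posSup x (A \ u)) : baryCoord x A u = 0 := by
  have hu : u.Nonempty := ⟨v, hv⟩
  rw [baryCoord, dif_pos hu, max_eq_left (by linarith [inf'_le x hv]), mul_zero]

theorem baryCoord_eq_zero_of_nonpos {x : V → ℝ} {A u : Finset V} {v : V} (hv : v ∈ u)
    (hxv : x v ≤ 0) : baryCoord x A u = 0 :=
  baryCoord_eq_zero hv (hxv.trans (posSup_nonneg x _))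

theorem baryCoord_of_subset {x : V → ℝ} {A B u : Finset V} (hAB : A ⊆ B)
    (hx : ∀ v ∈ B \ A, x v = 0) : baryCoord x B u = baryCoord x A u := by
  have hsup : posSup x (B \ u) = posSup x (A \ u) := by
    refine le_antisymm (posSup_le (posSup_nonneg x _) fun v hv => ?_)
      (posSup_le (posSup_nonneg x _) fun v hv => le_posSup (sdiff_subset_sdiff hAB le_rfl hv))
    by_cases hvA : v ∈ A
    · exact le_posSup (mem_sdiff.2 ⟨hvA, (mem_sdiff.1 hv).2⟩)
    · rw [hx v (mem_sdiff.2 ⟨(mem_sdiff.1 hv).1, hvA⟩)]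
      exact posSup_nonneg x _
  simp only [baryCoord, hsup]

theorem posSup_lt_of_baryCoord_ne_zero {x : V → ℝ} {A u : Finset V} (h : baryCoord x A u ≠ 0) :
    u.Nonempty ∧ ∀ v ∈ u, posSup x (A \ u) < x v := by
  by_cases hu : u.Nonempty
  · exact ⟨hu, fun v hv => lt_of_not_ge fun hle => h (baryCoord_eq_zero hv hle)⟩
  · exact absurd (dif_neg hu) h

theorem subset_or_subset_of_baryCoord_ne_zero {x : V → ℝ} {A u u' : Finset V}
    (hu : u ⊆ A) (hu' : u' ⊆ A) (h : baryCoord x A u ≠ 0) (h' : baryCoord x A u' ≠ 0) :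
    u ⊆ u' ∨ u' ⊆ u := by
  by_contra! hcon
  obtain ⟨v, hv, hvu'⟩ := not_subset.1 hcon.1
  obtain ⟨w, hw, hwu⟩ := not_subset.1 hcon.2
  have := (posSup_lt_of_baryCoord_ne_zero h).2 v hv
  have := (posSup_lt_of_baryCoord_ne_zero h').2 w hw
  have := le_posSup (x := x) (mem_sdiff.2 ⟨hu' hw, hwu⟩)
  have := le_posSup (x := x) (mem_sdiff.2 ⟨hu hv, hvu'⟩)
  linarith

theorem abs_baryCoord_sub_le {x y : V → ℝ} {A u : Finset V} {δ : ℝ} (hδ : 0 ≤ δ)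
    (h : ∀ v ∈ A ∪ u, |x v - y v| ≤ δ) :
    |baryCoord x A u - baryCoord y A u| ≤ u.card * (2 * δ) := by
  unfold baryCoord
  split_ifs with hu
  · rw [← mul_sub, abs_mul, Nat.abs_cast]
    gcongr
    calc _ ≤ |(u.inf' hu x - u.inf' hu y) - (posSup x (A \ u) - posSup y (A \ u))| := by
          rw [max_comm 0, max_comm 0]
          exact (abs_max_sub_max_le_abs _ _ _).trans_eq (by ring_nf)
      _ ≤ δ + δ := (abs_sub _ _).trans (add_le_add
          (abs_inf'_sub_le hu fun v hv => h v (mem_union_right _ hv))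
          (abs_posSup_sub_le hδ fun v hv => h v (mem_union_left _ (mem_sdiff.1 hv).1)))
      _ = 2 * δ := by ring
  · rw [sub_self, abs_zero]
    positivity

theorem baryCoord_insert {x : V → ℝ} {B u : Finset V} {m : V} (hmB : m ∉ B) (huB : u ⊆ B)
    (hm : 0 ≤ x m) : baryCoord x (insert m B) u = baryCoord (fun v => x v - x m) B u := by
  unfold baryCoord
  split_ifs with hu
  · have hmu : m ∉ B \ u := fun h => hmB (mem_sdiff.1 h).1
    rw [insert_sdiff_of_notMem _ fun h => hmB (huB h), posSup_insert hmu,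
      ← posSup_sub_const x (B \ u) hm, inf'_sub_const]
    congr 2
    ring
  · rfl

theorem baryCoord_self {x : V → ℝ} {A : Finset V} (hA : A.Nonempty) (hx : ∀ v ∈ A, 0 ≤ x v) :
    baryCoord x A A = A.card * A.inf' hA x := by
  rw [baryCoord, dif_pos hA, sdiff_self, bot_eq_empty, posSup, fold_empty, sub_zero,
    max_eq_right ((le_inf'_iff hA x).2 hx)]

/-- Peel off a vertex `m` of minimal weight: among the faces containing `m` only `A` itself
carries weight, and the faces avoiding `m` carry the weights of `x - x m` on `A.erase m`. -/
theorem sum_baryCoord (x : V → ℝ) (A : Finset V) (hx : ∀ v ∈ A, 0 ≤ x v) :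
    ∑ u ∈ A.powerset, baryCoord x A u = ∑ v ∈ A, x v := by
  induction hn : A.card generalizing x A with
  | zero => simp [card_eq_zero.1 hn, baryCoord]
  | succ n ih =>
    have hA : A.Nonempty := card_pos.1 (by omega)
    obtain ⟨m, hmA, hmin⟩ := exists_min_image A x hA
    set B := A.erase m
    have hmB : m ∉ B := notMem_erase m A
    have hAB : A = insert m B := (insert_erase hmA).symm
    have hinf : A.inf' hA x = x m :=
      le_antisymm (inf'_le x hmA) ((le_inf'_iff hA x).2 hmin)
    have hlower : ∑ u ∈ B.powerset, baryCoord x A u = ∑ v ∈ B, (x v - x m) := by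
      rw [← ih (fun v => x v - x m) B (fun v hv => sub_nonneg.2 (hmin v (mem_of_mem_erase hv)))
        (by rw [card_erase_of_mem hmA, hn]; rfl)]
      refine sum_congr rfl fun u hu => ?_
      rw [hAB, baryCoord_insert hmB (mem_powerset.1 hu) (hx m hmA)]
    have hupper : ∑ u ∈ B.powerset, baryCoord x A (insert m u) = A.card * x m := by
      rw [sum_eq_single_of_mem B (mem_powerset_self B), ← hAB, baryCoord_self hA hx, hinf]
      intro u hu huB
      obtain ⟨w, hwB, hwu⟩ := exists_of_ssubset (ssubset_of_subset_of_ne (mem_powerset.1 hu) huB)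
      refine baryCoord_eq_zero (mem_insert_self m u) ((hmin w (mem_of_mem_erase hwB)).trans
        (le_posSup (mem_sdiff.2 ⟨mem_of_mem_erase hwB, ?_⟩)))
      exact fun h => (mem_insert.1 h).elim (fun hwm => hmB (hwm ▸ hwB)) hwu
    rw [hAB, sum_powerset_insert hmB, ← hAB, hlower, hupper, hAB, sum_insert hmB,
      card_insert_of_notMem hmB, sum_sub_distrib, sum_const, nsmul_eq_mul]
    push_cast
    ring

end BarycentricSubdivision

section Image

variable {V W : Type*} [DecidableEq W]

theorem posSup_image (σ : V ≃ W) (x : V → ℝ) (s : Finset V) :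
    posSup (fun w => x (σ.symm w)) (s.image σ) = posSup x s := by
  rw [posSup, posSup, fold_image σ.injective.injOn]
  simp only [Function.comp_def, Equiv.symm_apply_apply]

variable [DecidableEq V]

theorem baryCoord_image (σ : V ≃ W) (x : V → ℝ) (A u : Finset V) :
    baryCoord (fun w => x (σ.symm w)) (A.image σ) (u.image σ) = baryCoord x A u := by
  unfold baryCoord
  by_cases hu : u.Nonempty
  · rw [dif_pos (hu.image σ), dif_pos hu, ← image_sdiff _ _ σ.injective, posSup_image,
      card_image_of_injective _ σ.injective, inf'_image]
    simp only [Function.comp_def, Equiv.symm_apply_apply]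
  · rw [dif_neg (by simpa using hu), dif_neg hu]

end Image

section NerveCoordinates

variable {V : Type*} {r : ℕ} (Ksub : Fin r → Set (Finset V))

open Classical in
noncomputable def nerveFace (u : Finset V) : Finset (Fin r) := {i | u ∈ Ksub i}

variable {Ksub}

theorem mem_nerveFace {u : Finset V} {i : Fin r} : i ∈ nerveFace Ksub u ↔ u ∈ Ksub i := by
  simp [nerveFace]

theorem nerveFace_antitone
    (hdown : ∀ i, ∀ s ∈ Ksub i, ∀ t, t ⊆ s → t.Nonempty → t ∈ Ksub i)
    {u u' : Finset V} (hu : u.Nonempty) (huu' : u ⊆ u') : nerveFace Ksub u' ⊆ nerveFace Ksub u :=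
  fun i hi => mem_nerveFace.2 (hdown i u' (mem_nerveFace.1 hi) u huu' hu)

variable [DecidableEq V]

theorem nerveFace_image (σ : Equiv.Perm V) (g : Equiv.Perm (Fin r))
    (hσ : ∀ i u, u ∈ Ksub i ↔ u.image σ ∈ Ksub (g i)) (u : Finset V) :
    nerveFace Ksub (u.image σ) = (nerveFace Ksub u).image g := by
  ext j
  rw [mem_nerveFace, ← g.apply_symm_apply j, g.injective.mem_finset_image, mem_nerveFace,
    hσ (g.symm j) u]

variable (Ksub)

noncomputable def nerveCoord (x : V → ℝ) (A : Finset V) (S : Finset (Fin r)) : ℝ :=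
  ∑ u ∈ A.powerset with nerveFace Ksub u = S, baryCoord x A u

theorem nerveCoord_nonneg (x : V → ℝ) (A : Finset V) (S : Finset (Fin r)) :
    0 ≤ nerveCoord Ksub x A S :=
  sum_nonneg fun u _ => baryCoord_nonneg x A u

theorem sum_nerveCoord (x : V → ℝ) (A : Finset V) :
    ∑ S, nerveCoord Ksub x A S = ∑ u ∈ A.powerset, baryCoord x A u :=
  sum_fiberwise _ _ _

variable {Ksub}

theorem nerveCoord_image (σ : Equiv.Perm V) (g : Equiv.Perm (Fin r))
    (hσ : ∀ i u, u ∈ Ksub i ↔ u.image σ ∈ Ksub (g i)) (x : V → ℝ) (A : Finset V)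
    (S : Finset (Fin r)) :
    nerveCoord Ksub (fun v => x (σ.symm v)) (A.image σ) (S.image g) = nerveCoord Ksub x A S := by
  rw [nerveCoord, powerset_image, filter_image,
    sum_image fun u _ u' _ h => image_injective σ.injective h]
  simp only [nerveFace_image σ g hσ, image_inj g.injective, baryCoord_image σ]
  rfl

theorem nerveCoord_of_subset {x : V → ℝ} {A B : Finset V} (hAB : A ⊆ B)
    (hx : ∀ v ∈ B \ A, x v = 0) (S : Finset (Fin r)) :
    nerveCoord Ksub x B S = nerveCoord Ksub x A S := by
  refine (sum_subset (filter_subset_filter _ (powerset_mono.2 hAB)) fun u hu huA => ?_).symm.trans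
    (sum_congr rfl fun _ _ => baryCoord_of_subset hAB hx)
  obtain ⟨v, hvu, hvA⟩ := not_subset.1 fun h => huA (mem_filter.2 ⟨mem_powerset.2 h,
    (mem_filter.1 hu).2⟩)
  exact baryCoord_eq_zero_of_nonpos hvu
    (hx v (mem_sdiff.2 ⟨mem_powerset.1 (mem_filter.1 hu).1 hvu, hvA⟩)).le

theorem nerveCoord_congr {x : V → ℝ} {A B : Finset V} (hA : ∀ v, x v ≠ 0 → v ∈ A)
    (hB : ∀ v, x v ≠ 0 → v ∈ B) (S : Finset (Fin r)) :
    nerveCoord Ksub x A S = nerveCoord Ksub x B S := by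
  have vanish : ∀ C : Finset V, (∀ v, x v ≠ 0 → v ∈ C) → ∀ v ∈ (A ∪ B) \ C, x v = 0 :=
    fun C hC v hv => not_not.1 fun h => (mem_sdiff.1 hv).2 (hC v h)
  rw [← nerveCoord_of_subset subset_union_left (vanish A hA),
    nerveCoord_of_subset subset_union_right (vanish B hB)]

theorem abs_nerveCoord_sub_le {x₀ x : V → ℝ} {A B : Finset V} (hAB : A ⊆ B)
    (hx₀ : ∀ v ∈ B \ A, x₀ v = 0) (hx : ∀ v ∈ B, 0 ≤ x v)
    (hsum : ∑ v ∈ B, x v ≤ ∑ v ∈ B, x₀ v) (hx₀_nonneg : ∀ v ∈ B, 0 ≤ x₀ v)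
    (S : Finset (Fin r)) :
    |nerveCoord Ksub x B S - nerveCoord Ksub x₀ A S| ≤
      2 ^ (A.card + 2) * A.card * ∑ v ∈ A, |x v - x₀ v| := by
  set δ := ∑ v ∈ A, |x v - x₀ v|
  have hδ : 0 ≤ δ := sum_nonneg fun v _ => abs_nonneg _
  have hclose : ∀ u ∈ A.powerset, |baryCoord x B u - baryCoord x₀ B u| ≤ A.card * (2 * δ) :=
    fun u hu => (abs_baryCoord_sub_le hδ fun v hv =>
      abs_sub_le_sum_abs_sub hAB hx hx₀ hsum (union_subset le_rfl
        ((mem_powerset.1 hu).trans hAB) hv)).trans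
      (by gcongr; exact mem_powerset.1 hu)
  have hmass : ∑ u ∈ B.powerset, baryCoord x B u ≤ ∑ u ∈ B.powerset, baryCoord x₀ B u := by
    rwa [sum_baryCoord x B hx, sum_baryCoord x₀ B hx₀_nonneg]
  have hcarrier : ∀ u ∈ B.powerset \ A.powerset, baryCoord x₀ B u = 0 := fun u hu => by
    obtain ⟨huB, huA⟩ := mem_sdiff.1 hu
    obtain ⟨v, hvu, hvA⟩ := not_subset.1 (mt mem_powerset.2 huA)
    exact baryCoord_eq_zero_of_nonpos hvu
      (hx₀ v (mem_sdiff.2 ⟨mem_powerset.1 huB hvu, hvA⟩)).le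
  rw [← nerveCoord_of_subset hAB hx₀, nerveCoord, nerveCoord]
  calc _ ≤ 2 * ∑ u ∈ A.powerset, |baryCoord x B u - baryCoord x₀ B u| :=
        abs_sum_sub_sum_le (powerset_mono.2 hAB) (filter_subset _ _)
          (fun u _ => baryCoord_nonneg x B u) hcarrier hmass
    _ ≤ 2 * (A.powerset.card * (A.card * (2 * δ))) := by
        gcongr
        exact sum_le_card_nsmul _ _ _ hclose |>.trans_eq (nsmul_eq_mul _ _)
    _ = 2 ^ (A.card + 2) * A.card * δ := by
        rw [card_powerset]
        push_cast
        ring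

end NerveCoordinates

section Realization

variable {V : Type} {K : AbstractSimplicialComplex' V}

noncomputable def faceOf (x : realization K) : Finset V := x.2.2.choose

theorem faceOf_mem (x : realization K) : faceOf x ∈ K.faces := x.2.2.choose_spec.1

theorem sum_faceOf (x : realization K) : ∑ v ∈ faceOf x, x.1 v = 1 := x.2.2.choose_spec.2.2

theorem mem_faceOf {x : realization K} {v : V} (hv : x.1 v ≠ 0) : v ∈ faceOf x :=
  x.2.2.choose_spec.2.1 v hv

theorem eq_zero_of_notMem_faceOf {x : realization K} {v : V} (hv : v ∉ faceOf x) : x.1 v = 0 :=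
  not_not.1 (mt mem_faceOf hv)

theorem sum_eq_one_of_faceOf_subset {x : realization K} {B : Finset V} (h : faceOf x ⊆ B) :
    ∑ v ∈ B, x.1 v = 1 :=
  (sum_subset h fun _ _ hv => eq_zero_of_notMem_faceOf hv).symm.trans (sum_faceOf x)

variable [DecidableEq V]

theorem nerveCoord_mem_nerveSubdivisionRealization {r : ℕ} {Ksub : Fin r → Set (Finset V)}
    (hdown : ∀ i, ∀ s ∈ Ksub i, ∀ t, t ⊆ s → t.Nonempty → t ∈ Ksub i)
    (hcover : ∀ s ∈ K.faces, ∃ i, s ∈ Ksub i) {x : V → ℝ} (hx : ∀ v, 0 ≤ x v)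
    {A : Finset V} (hA : A ∈ K.faces) (hsum : ∑ v ∈ A, x v = 1) :
    nerveCoord Ksub x A ∈ nerveSubdivisionRealization r K Ksub := by
  have carrier : ∀ S, nerveCoord Ksub x A S ≠ 0 → ∃ u ⊆ A, u.Nonempty ∧
      nerveFace Ksub u = S ∧ baryCoord x A u ≠ 0 := fun S hS => by
    obtain ⟨u, hu, hux⟩ := exists_ne_zero_of_sum_ne_zero hS
    obtain ⟨huA, rfl⟩ := mem_filter.1 hu
    exact ⟨u, mem_powerset.1 huA, (posSup_lt_of_baryCoord_ne_zero hux).1, rfl, hux⟩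
  refine ⟨nerveCoord_nonneg Ksub x A, ?_, fun S hS => ?_, fun S T hS hT => ?_⟩
  · rw [sum_nerveCoord, sum_baryCoord x A fun v _ => hx v, hsum]
  · obtain ⟨u, huA, hu, rfl, -⟩ := carrier S hS
    have huK : u ∈ K.faces := K.down_closed A hA u huA hu
    obtain ⟨i, hi⟩ := hcover u huK
    exact ⟨⟨i, mem_nerveFace.2 hi⟩, u, huK, fun j hj => mem_nerveFace.1 hj⟩
  · obtain ⟨u, huA, hu, rfl, hux⟩ := carrier S hS
    obtain ⟨u', huA', hu', rfl, hux'⟩ := carrier T hT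
    rcases subset_or_subset_of_baryCoord_ne_zero huA huA' hux hux' with h | h
    · exact Or.inr (nerveFace_antitone hdown hu h)
    · exact Or.inl (nerveFace_antitone hdown hu' h)

theorem continuous_nerveCoord_faceOf {r : ℕ} (Ksub : Fin r → Set (Finset V))
    (S : Finset (Fin r)) : Continuous fun x : realization K => nerveCoord Ksub x.1 (faceOf x) S := by
  refine continuous_iff_continuousAt.2 fun x₀ => ?_
  set A := faceOf x₀
  set C : ℝ := 2 ^ (A.card + 2) * A.card
  have hbound : ∀ x : realization K, dist (nerveCoord Ksub x.1 (faceOf x) S)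
      (nerveCoord Ksub x₀.1 A S) ≤ C * ∑ v ∈ A, |x.1 v - x₀.1 v| := fun x => by
    rw [Real.dist_eq, ← nerveCoord_of_subset subset_union_right
      fun v hv => eq_zero_of_notMem_faceOf (mem_sdiff.1 hv).2]
    refine abs_nerveCoord_sub_le subset_union_left
      (fun v hv => eq_zero_of_notMem_faceOf (mem_sdiff.1 hv).2) (fun v _ => x.2.1 v) ?_
      (fun v _ => x₀.2.1 v) S
    rw [sum_eq_one_of_faceOf_subset subset_union_right,
      sum_eq_one_of_faceOf_subset subset_union_left]
  have hlim : Tendsto (fun x : realization K => C * ∑ v ∈ A, |x.1 v - x₀.1 v|) (𝓝 x₀) (𝓝 0) := by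
    have : Continuous fun x : realization K => C * ∑ v ∈ A, |x.1 v - x₀.1 v| :=
      continuous_const.mul <| continuous_finsetSum _ fun v _ =>
        (((continuous_apply v).comp continuous_subtype_val).sub continuous_const).abs
    simpa using this.tendsto x₀
  exact tendsto_iff_dist_tendsto_zero.2 (squeeze_zero (fun _ => dist_nonneg) hbound hlim)

end Realization

theorem exists_equivariant_map_to_nerve_subdivision_general
    {V : Type} [DecidableEq V] (r : ℕ) (K : AbstractSimplicialComplex' V)
    (ρ : Equiv.Perm (Fin r) →* Equiv.Perm V)
    (Ksub : Fin r → Set (Finset V))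
    (hdown : ∀ i, ∀ s ∈ Ksub i, ∀ t, t ⊆ s → t.Nonempty → t ∈ Ksub i)
    (hcover : ∀ s ∈ K.faces, ∃ i, s ∈ Ksub i)
    (hact : ∀ (g : Equiv.Perm (Fin r)) (i : Fin r) (s : Finset V),
      s ∈ Ksub i ↔ s.image (ρ g) ∈ Ksub (g i)) :
    ∃ F : ↥(realization K) → ↥(nerveSubdivisionRealization r K Ksub),
      Continuous F ∧
      ∀ (g : Equiv.Perm (Fin r)) (x x' : ↥(realization K)),
        (∀ v, x'.val v = x.val ((ρ g).symm v)) →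
        ∀ S : Finset (Fin r), (F x').val S = (F x).val (S.image ⇑g⁻¹) := by
  refine ⟨fun x => ⟨nerveCoord Ksub x.1 (faceOf x), nerveCoord_mem_nerveSubdivisionRealization
    hdown hcover x.2.1 (faceOf_mem x) (sum_faceOf x)⟩, ?_, fun g x x' hx' S => ?_⟩
  · exact (continuous_pi (continuous_nerveCoord_faceOf Ksub)).subtype_mk _
  · have hsupp : ∀ v, x'.1 v ≠ 0 → v ∈ (faceOf x).image (ρ g) := fun v hv =>
      mem_image.2 ⟨_, mem_faceOf (hx' v ▸ hv), (ρ g).apply_symm_apply v⟩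
    calc nerveCoord Ksub x'.1 (faceOf x') S
        = nerveCoord Ksub x'.1 ((faceOf x).image (ρ g)) ((S.image ⇑g⁻¹).image g) := by
          rw [nerveCoord_congr (fun _ => mem_faceOf) hsupp, image_image, Equiv.Perm.coe_inv,
            Equiv.self_comp_symm, image_id]
      _ = nerveCoord Ksub x.1 (faceOf x) (S.image ⇑g⁻¹) := by
          rw [funext hx']
          exact nerveCoord_image (ρ g) g (hact g) x.1 _ _

/-- **Proposition 3.4**. Let `K` be a simplicial complex covered by subcomplexes
`K = K_1 ∪ ⋯ ∪ K_r`, and let the symmetric group `Σ_r` act simplicially on `K` (via `ρ`) so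
that `g · K_i = K_{g(i)}`.  Then there is a `Σ_r`-equivariant continuous map from `K` to the
barycentric subdivision `Δ(N(K))` of the nerve of the covering, where `Σ_r` acts on the
nerve by permuting `K_1, …, K_r`. -/
theorem exists_equivariant_map_to_nerve_subdivision
    {V : Type} [DecidableEq V] (r : ℕ) (K : AbstractSimplicialComplex' V)
    (ρ : Equiv.Perm (Fin r) →* Equiv.Perm V)
    (hρ : ∀ g : Equiv.Perm (Fin r), ∀ s ∈ K.faces, s.image (ρ g) ∈ K.faces)
    (Ksub : Fin r → Set (Finset V))
    (hsub : ∀ i, Ksub i ⊆ K.faces)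
    (hdown : ∀ i, ∀ s ∈ Ksub i, ∀ t, t ⊆ s → t.Nonempty → t ∈ Ksub i)
    (hcover : ∀ s ∈ K.faces, ∃ i, s ∈ Ksub i)
    (hact : ∀ (g : Equiv.Perm (Fin r)) (i : Fin r) (s : Finset V),
      s ∈ Ksub i ↔ s.image (ρ g) ∈ Ksub (g i)) :
    ∃ F : ↥(realization K) → ↥(nerveSubdivisionRealization r K Ksub),
      Continuous F ∧
      ∀ (g : Equiv.Perm (Fin r)) (x x' : ↥(realization K)),
        (∀ v, x'.val v = x.val ((ρ g).symm v)) →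
        ∀ S : Finset (Fin r), (F x').val S = (F x).val (S.image ⇑g⁻¹) :=
  exists_equivariant_map_to_nerve_subdivision_general r K ρ Ksub hdown hcover hact
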